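/- Let F be a field, V a vector space over F, S ⊆ V a subspace, and {v_i}_{i∈I} a finite nonempty family of vectors of V which is linearly independent over F and satisfies S ∩ span_F{v_i : i ∈ I} ≠ {0}. Suppose I is minimal with the property that there exist scalars c_i ∈ F∖{0} (i ∈ I) with Σ_{i∈I} c_i v_i ∈ S; that is, no proper nonempty subset J ⊊ I admits scalars c_i ∈ F∖{0} (i ∈ J) with Σ_{i∈J} c_i v_i ∈ S. Then dim_F (S ∩ span_F{v_i : i ∈ I}) = 1. -/

import Mathlib

/-!
Fix `c` with all `c i ≠ 0` and `w = ∑ c i • v i ∈ S`. By minimality, an element `∑ d i • v i`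
of `S` with some vanishing coefficient has all coefficients zero, since its support would be a
smaller admissible index set. Given `x = ∑ d i • v i` in `S ∩ span v`, subtracting the multiple
of `w` that kills the coefficient at one index therefore leaves `0`, so `S ∩ span v` is the line
`F ∙ w`, and `w ≠ 0` because this intersection is nonzero.
-/

open Submodule

section Minimal

variable {F V ι : Type*} [AddCommGroup V] [Fintype ι] {v : ι → V}

theorem eq_zero_of_sum_smul_mem_of_minimal [Semiring F] [Module F V] {S : Submodule F V}
    (hmin : ∀ J : Finset ι, J.Nonempty → J ≠ Finset.univ →
      ¬ ∃ c : ι → F, (∀ i ∈ J, c i ≠ 0) ∧ (∑ i ∈ J, c i • v i) ∈ S)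
    {d : ι → F} (hdS : ∑ i, d i • v i ∈ S) {j : ι} (hj : d j = 0) : d = 0 := by
  classical
  by_contra hd
  obtain ⟨k, hk⟩ := Function.ne_iff.mp hd
  refine hmin {i | d i ≠ 0} ⟨k, by simpa using hk⟩ (fun h ↦ ?_) ⟨d, by simp, ?_⟩
  · simpa [hj] using h.ge (Finset.mem_univ j)
  · rwa [Finset.sum_filter_of_ne fun i _ ↦ left_ne_zero_of_smul]

theorem inf_span_range_le_span_singleton_of_minimal [DivisionRing F] [Module F V] [Nonempty ι]
    {S : Submodule F V}
    (hmin : ∀ J : Finset ι, J.Nonempty → J ≠ Finset.univ →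
      ¬ ∃ c : ι → F, (∀ i ∈ J, c i ≠ 0) ∧ (∑ i ∈ J, c i • v i) ∈ S)
    {c : ι → F} (hc : ∀ i, c i ≠ 0) (hcS : ∑ i, c i • v i ∈ S) :
    S ⊓ span F (Set.range v) ≤ F ∙ ∑ i, c i • v i := by
  rintro x ⟨hxS, hxv⟩
  obtain ⟨d, rfl⟩ := (mem_span_range_iff_exists_fun F).mp hxv
  obtain ⟨j⟩ := ‹Nonempty ι›
  set a := d j / c j
  have hdiff : ∑ i, (d i - a * c i) • v i = ∑ i, d i • v i - a • ∑ i, c i • v i := by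
    simp only [sub_smul, mul_smul, Finset.sum_sub_distrib, Finset.smul_sum]
  have hzero : ∀ i, d i - a * c i = 0 := congrFun <|
    eq_zero_of_sum_smul_mem_of_minimal hmin (hdiff ▸ S.sub_mem hxS (S.smul_mem a hcS))
      (j := j) (by simp [a, hc j])
  refine mem_span_singleton.mpr ⟨a, ?_⟩
  rw [eq_comm, ← sub_eq_zero, ← hdiff]
  simp [hzero]

end Minimal

theorem finrank_inf_span_eq_one_of_minimal_general
    {F V : Type*} [Field F] [AddCommGroup V] [Module F V]
    (S : Submodule F V) {ι : Type*} [Fintype ι] [Nonempty ι] (v : ι → V)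
    (hne : S ⊓ Submodule.span F (Set.range v) ≠ ⊥)
    (hex : ∃ c : ι → F, (∀ i, c i ≠ 0) ∧ (∑ i, c i • v i) ∈ S)
    (hmin : ∀ J : Finset ι, J.Nonempty → J ≠ Finset.univ →
      ¬ ∃ c : ι → F, (∀ i ∈ J, c i ≠ 0) ∧ (∑ i ∈ J, c i • v i) ∈ S) :
    Module.finrank F ↥(S ⊓ Submodule.span F (Set.range v)) = 1 := by
  obtain ⟨c, hc, hcS⟩ := hex
  have hle := inf_span_range_le_span_singleton_of_minimal hmin hc hcS
  have hmem : ∑ i, c i • v i ∈ span F (Set.range v) :=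
    (mem_span_range_iff_exists_fun F).mpr ⟨c, rfl⟩
  have heq : S ⊓ span F (Set.range v) = F ∙ ∑ i, c i • v i :=
    hle.antisymm ((span_singleton_le_iff_mem _ _).mpr ⟨hcS, hmem⟩)
  have hw : ∑ i, c i • v i ≠ 0 := fun h ↦ hne (by simpa [h] using heq)
  rw [heq, finrank_span_singleton hw]

/-- Let `F` be a field, `V` a vector space over `F`, `S ⊆ V` a subspace and `(v_i)_{i ∈ ι}`
a finite nonempty linearly independent family with `S ∩ span{v_i} ≠ {0}`.  If `ι` is
minimal with the property that some combination `Σ c_i v_i` with all `c_i ≠ 0` lies in `S`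
(no proper nonempty subset admits such a combination), then
`dim_F (S ∩ span{v_i : i ∈ ι}) = 1`. -/
theorem finrank_inf_span_eq_one_of_minimal
    {F V : Type*} [Field F] [AddCommGroup V] [Module F V]
    (S : Submodule F V) {ι : Type*} [Fintype ι] [Nonempty ι] (v : ι → V)
    (hind : LinearIndependent F v)
    (hne : S ⊓ Submodule.span F (Set.range v) ≠ ⊥)
    (hex : ∃ c : ι → F, (∀ i, c i ≠ 0) ∧ (∑ i, c i • v i) ∈ S)
    (hmin : ∀ J : Finset ι, J.Nonempty → J ≠ Finset.univ →
      ¬ ∃ c : ι → F, (∀ i ∈ J, c i ≠ 0) ∧ (∑ i ∈ J, c i • v i) ∈ S) :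
    Module.finrank F ↥(S ⊓ Submodule.span F (Set.range v)) = 1 :=
  finrank_inf_span_eq_one_of_minimal_general S v hne hex hmin
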